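/- Let G be a simple connected graph on n nodes with local stochastic matrices A_{ij}. The following are equivalent: (i) there is a unique probability vector p with all entries positive such that for every infinite spanning sequence γ of edges, the infinite ordered product P_γ converges to the rank-one matrix 𝟏pᵀ; (ii) the A_{ij} are holonomic for G. -/

import Mathlib

open Matrix Finset

/-- The local stochastic matrix `A_{ij}`: identity except for the 2×2 principal
submatrix on rows/columns `i,j`, which is `[[1-a_{ij}, a_{ij}],[a_{ji}, 1-a_{ji}]]`. -/
def locMat {n : ℕ} (a : Fin n → Fin n → ℝ) (i j : Fin n) : Matrix (Fin n) (Fin n) ℝ :=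
  Matrix.of fun k l =>
    if k = i then (if l = i then 1 - a i j else if l = j then a i j else 0)
    else if k = j then (if l = i then a j i else if l = j then 1 - a j i else 0)
    else if k = l then 1 else 0

/-- `R_w`: the product of the ratios `r` along the (directed) edges of a walk `w`. -/
def Rwalk {n : ℕ} (r : Fin n → Fin n → ℝ) {G : SimpleGraph (Fin n)} {u v : Fin n}
    (w : G.Walk u v) : ℝ :=
  (w.darts.map fun d => r d.toProd.1 d.toProd.2).prod

/-- The local stochastic matrices (given by the weights `a`) are holonomic for `G`:
`R_C = 1` for every cycle `C` of length greater than 2. -/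
def Holonomic {n : ℕ} (G : SimpleGraph (Fin n)) (a : Fin n → Fin n → ℝ) : Prop :=
  ∀ (u : Fin n) (c : G.Walk u u), c.IsCycle → 2 < c.length →
    Rwalk (fun i j => a i j / a j i) c = 1

/-- The left-ordered product `P_{γ(t:0)} = A_{e_t} ⋯ A_{e_1}` along an infinite edge
sequence `γ`. -/
def Pseq {n : ℕ} (a : Fin n → Fin n → ℝ) (γ : ℕ → Fin n × Fin n) :
    ℕ → Matrix (Fin n) (Fin n) ℝ
  | 0 => 1
  | t + 1 => locMat a (γ t).1 (γ t).2 * Pseq a γ t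

/-- The string `γ(s), …, γ(s+l-1)` of the edge sequence `γ` is spanning: the edges
appearing in it form a connected spanning subgraph (i.e. cover a spanning tree). -/
def SpanningSeg {n : ℕ} (γ : ℕ → Fin n × Fin n) (s l : ℕ) : Prop :=
  (SimpleGraph.fromRel fun i j =>
      ∃ t, s ≤ t ∧ t < s + l ∧ (γ t = (i, j) ∨ γ t = (j, i))).Connected

/-- An infinite edge sequence is spanning: it contains infinitely many disjoint
finite spanning strings. -/
def InfSpanning {n : ℕ} (γ : ℕ → Fin n × Fin n) : Prop :=
  ∀ t : ℕ, ∃ s l : ℕ, t ≤ s ∧ SpanningSeg γ s l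


section helpers
variable {n : ℕ} {G : SimpleGraph (Fin n)}

lemma Rwalk_nil {r : Fin n → Fin n → ℝ} {u : Fin n} :
    Rwalk r (SimpleGraph.Walk.nil : G.Walk u u) = 1 := rfl

lemma not_edge_endpoints {u v : Fin n} (w : G.Walk v u) (hn : w.support.Nodup)
    (hlen : 2 ≤ w.length) : s(u, v) ∉ w.edges := by
  intro he
  cases w with
  | nil => simp at hlen
  | cons h' w' =>
    rename_i w₁
    rw [SimpleGraph.Walk.edges_cons, List.mem_cons] at he
    rw [SimpleGraph.Walk.support_cons, List.nodup_cons] at hn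
    rcases he with he | he
    · have huv : u ≠ v := by
        rintro rfl
        exact hn.1 w'.end_mem_support
      have huw : u = w₁ := by
        rcases Sym2.eq_iff.mp he with ⟨h1, h2⟩ | ⟨h1, h2⟩
        · exact absurd h1 huv
        · first | exact h1 | exact h1.symm | exact h2 | exact h2.symm
      subst huw
      have hz : w'.length ≠ 0 := by
        rw [SimpleGraph.Walk.length_cons] at hlen; omega
      have : u ∈ w'.support.tail := by
        cases w' with
        | nil => simp at hz
        | cons h'' w'' =>
          rw [SimpleGraph.Walk.support_cons]
          simpa using w''.end_mem_support
      cases w' with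
      | nil => simp at hz
      | cons h'' w'' =>
        rw [SimpleGraph.Walk.support_cons, List.nodup_cons] at hn
        exact hn.2.1 (by simpa using this)
    · exact hn.1 (SimpleGraph.Walk.snd_mem_support_of_mem_edges w' he)

lemma Rwalk_cons {r : Fin n → Fin n → ℝ} {u v w : Fin n} (h : G.Adj u v) (p : G.Walk v w) :
    Rwalk r (SimpleGraph.Walk.cons h p) = r u v * Rwalk r p := by
  simp [Rwalk, SimpleGraph.Walk.darts_cons]

lemma Rwalk_append {r : Fin n → Fin n → ℝ} {u v w : Fin n} (p : G.Walk u v) (q : G.Walk v w) :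
    Rwalk r (p.append q) = Rwalk r p * Rwalk r q := by
  simp [Rwalk, SimpleGraph.Walk.darts_append]

lemma Rwalk_rotate {r : Fin n → Fin n → ℝ} {u x : Fin n} (c : G.Walk u u) (hx : x ∈ c.support) :
    Rwalk r (c.rotate x hx) = Rwalk r c :=
  List.Perm.prod_eq (List.Perm.map _ (c.rotate_darts x hx).perm)

lemma closed_walk_R_one
    (a : Fin n → Fin n → ℝ) (ha : ∀ i j, G.Adj i j → a i j ∈ Set.Ioo (0:ℝ) 1)
    (hHol : ∀ (u : Fin n) (c : G.Walk u u), c.IsCycle → 2 < c.length →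
      Rwalk (fun i j => a i j / a j i) c = 1) :
    ∀ (N : ℕ) (u : Fin n) (c : G.Walk u u), c.length ≤ N →
      Rwalk (fun i j => a i j / a j i) c = 1 := by
  intro N
  induction N with
  | zero =>
    intro u c hc
    cases c with
    | nil => rfl
    | cons h d => simp at hc
  | succ N ih =>
    intro u c hc
    -- key sub-step: any closed walk whose tail-support has a repeated vertex splits
    by_cases hrep : ∃ x, 2 ≤ c.support.tail.count x
    · obtain ⟨x, hx2⟩ := hrep
      have hxs : x ∈ c.support := by
        apply List.mem_of_mem_tail
        exact List.count_pos_iff.mp (by omega)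
      set c₂ := c.rotate x hxs with hc₂
      have hR : Rwalk (fun i j => a i j / a j i) c₂ =
          Rwalk (fun i j => a i j / a j i) c := Rwalk_rotate c hxs
      have hlen2 : c₂.length = c.length := by
        have h := (c.rotate_darts x hxs).perm.length_eq
        rwa [SimpleGraph.Walk.length_darts, SimpleGraph.Walk.length_darts] at h
      have hcount2 : 2 ≤ c₂.support.tail.count x := by
        rw [hc₂]
        have := (SimpleGraph.Walk.support_rotate c x hxs).perm.count_eq x
        omega
      cases hc₂eq : c₂ with
      | nil =>
        rw [← hR, hc₂eq]; rfl
      | cons h₂ d₂ =>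
        rename_i v₂
        have hxd : x ∈ d₂.support := d₂.end_mem_support
        have hspec := d₂.take_spec hxd
        have hcnt1 : (d₂.takeUntil x hxd).support.count x = 1 :=
          d₂.count_support_takeUntil_eq_one hxd
        have hdropne : (d₂.dropUntil x hxd).length ≠ 0 := by
          intro h0
          have hdnil : d₂.dropUntil x hxd = SimpleGraph.Walk.nil := by
            cases hd : d₂.dropUntil x hxd with
            | nil => rfl
            | cons hh dd => rw [hd] at h0; simp at h0
          have : d₂.support.count x = 1 := by
            rw [← hspec, hdnil]
            simpa using hcnt1
          have : c₂.support.tail.count x = 1 := by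
            rw [hc₂eq, SimpleGraph.Walk.support_cons]; simpa using this
          omega
        have hlensum : (d₂.takeUntil x hxd).length + (d₂.dropUntil x hxd).length
            = d₂.length := by
          have := congr_arg SimpleGraph.Walk.length hspec
          rwa [SimpleGraph.Walk.length_append] at this
        have hlc : c.length = d₂.length + 1 := by
          rw [← hlen2, hc₂eq]; simp [SimpleGraph.Walk.length_cons]
        have h1 : Rwalk (fun i j => a i j / a j i)
            (SimpleGraph.Walk.cons h₂ (d₂.takeUntil x hxd)) = 1 := by
          apply ih
          rw [SimpleGraph.Walk.length_cons]
          omega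
        have h2 : Rwalk (fun i j => a i j / a j i) (d₂.dropUntil x hxd) = 1 := by
          apply ih; omega
        rw [← hR, hc₂eq]
        calc Rwalk (fun i j => a i j / a j i) (SimpleGraph.Walk.cons h₂ d₂)
            = Rwalk (fun i j => a i j / a j i)
              (SimpleGraph.Walk.cons h₂ ((d₂.takeUntil x hxd).append (d₂.dropUntil x hxd))) := by
              rw [hspec]
          _ = 1 := by
              rw [Rwalk_cons, Rwalk_append, h2, mul_one]
              rw [Rwalk_cons] at h1
              exact h1
    · -- tail support nodup
      push_neg at hrep
      have hnd : c.support.tail.Nodup := List.nodup_iff_count_le_one.mpr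
        (fun x => by have := hrep x; omega)
      cases hceq : c with
      | nil => rfl
      | cons h d =>
        rename_i v
        have hdnd : d.support.Nodup := by
          have := hnd
          rw [hceq, SimpleGraph.Walk.support_cons] at this
          simpa using this
        by_cases hd2 : 2 ≤ d.length
        · -- genuine cycle
          have hcyc : (SimpleGraph.Walk.cons h d).IsCycle := by
            rw [SimpleGraph.Walk.cons_isCycle_iff]
            exact ⟨SimpleGraph.Walk.IsPath.mk' hdnd, not_edge_endpoints d hdnd hd2⟩
          exact hHol u _ hcyc (by rw [SimpleGraph.Walk.length_cons]; omega)
        · -- d has length ≤ 1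
          cases d with
          | nil => exact absurd h (G.irrefl)
          | cons h' d' =>
            cases d' with
            | nil =>
              rw [Rwalk_cons, Rwalk_cons]
              have h1 := ha u v h
              have h2 := ha v u h.symm
              have e1 : a u v ≠ 0 := ne_of_gt h1.1
              have e2 : a v u ≠ 0 := ne_of_gt h2.1
              have hn : Rwalk (fun i j => a i j / a j i)
                  (SimpleGraph.Walk.nil : G.Walk u u) = 1 := rfl
              rw [hn, mul_one]
              field_simp
            | cons h'' d'' =>
              exfalso
              apply hd2
              rw [SimpleGraph.Walk.length_cons, SimpleGraph.Walk.length_cons]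
              omega

lemma Rwalk_reverse_mul
    {a : Fin n → Fin n → ℝ} (ha : ∀ i j, G.Adj i j → a i j ∈ Set.Ioo (0:ℝ) 1)
    {u v : Fin n} (w : G.Walk u v) :
    Rwalk (fun i j => a i j / a j i) w.reverse * Rwalk (fun i j => a i j / a j i) w = 1 := by
  induction w with
  | nil => simp [Rwalk]
  | cons h p ih =>
    rename_i x y z
    rw [SimpleGraph.Walk.reverse_cons, Rwalk_append, Rwalk_cons, Rwalk_cons]
    have hn : Rwalk (fun i j => a i j / a j i) (SimpleGraph.Walk.nil : G.Walk x x) = 1 := rfl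
    rw [hn, mul_one]
    have e1 : a x y ≠ 0 := ne_of_gt (ha x y h).1
    have e2 : a y x ≠ 0 := ne_of_gt (ha y x h.symm).1
    have hone : (a y x / a x y) * (a x y / a y x) = 1 := by field_simp
    have key : Rwalk (fun i j => a i j / a j i) p.reverse * (a y x / a x y) *
        ((a x y / a y x) * Rwalk (fun i j => a i j / a j i) p) =
        (Rwalk (fun i j => a i j / a j i) p.reverse * Rwalk (fun i j => a i j / a j i) p) *
        ((a y x / a x y) * (a x y / a y x)) := by ring
    rw [key, ih, hone, mul_one]

lemma Rwalk_pos
    {a : Fin n → Fin n → ℝ} (ha : ∀ i j, G.Adj i j → a i j ∈ Set.Ioo (0:ℝ) 1)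
    {u v : Fin n} (w : G.Walk u v) : 0 < Rwalk (fun i j => a i j / a j i) w := by
  induction w with
  | nil => norm_num [Rwalk]
  | cons h p ih =>
    rw [Rwalk_cons]
    exact mul_pos (div_pos (ha _ _ h).1 (ha _ _ h.symm).1) ih

lemma Rwalk_indep
    {a : Fin n → Fin n → ℝ} (ha : ∀ i j, G.Adj i j → a i j ∈ Set.Ioo (0:ℝ) 1)
    (hHol : ∀ (u : Fin n) (c : G.Walk u u), c.IsCycle → 2 < c.length →
      Rwalk (fun i j => a i j / a j i) c = 1)
    {u v : Fin n} (w₁ w₂ : G.Walk u v) :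
    Rwalk (fun i j => a i j / a j i) w₁ = Rwalk (fun i j => a i j / a j i) w₂ := by
  have hc := closed_walk_R_one a ha hHol (w₁.append w₂.reverse).length u
    (w₁.append w₂.reverse) le_rfl
  rw [Rwalk_append] at hc
  have h2 := Rwalk_reverse_mul ha w₂
  have hpos := Rwalk_pos ha w₂.reverse
  have hne : Rwalk (fun i j => a i j / a j i) w₂.reverse ≠ 0 := ne_of_gt hpos
  field_simp at hc h2 ⊢
  nlinarith [hc, h2]

lemma exists_db (hGc : G.Connected)
    {a : Fin n → Fin n → ℝ} (ha : ∀ i j, G.Adj i j → a i j ∈ Set.Ioo (0:ℝ) 1)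
    (hHol : ∀ (u : Fin n) (c : G.Walk u u), c.IsCycle → 2 < c.length →
      Rwalk (fun i j => a i j / a j i) c = 1) :
    ∃ p : Fin n → ℝ, (∀ i, 0 < p i) ∧ ∑ i, p i = 1 ∧
      ∀ i j, G.Adj i j → p i * a i j = p j * a j i := by
  classical
  have hne : Nonempty (Fin n) := hGc.nonempty
  obtain ⟨v0⟩ := hne
  set r : Fin n → Fin n → ℝ := fun i j => a i j / a j i with hr
  let q : Fin n → ℝ := fun i => Rwalk r ((hGc.preconnected v0 i).some)
  have hqpos : ∀ i, 0 < q i := fun i => Rwalk_pos ha _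
  have hsum : 0 < ∑ i, q i := Finset.sum_pos (fun i _ => hqpos i) ⟨v0, Finset.mem_univ v0⟩
  have hdb : ∀ i j, G.Adj i j → q j = q i * r i j := by
    intro i j hij
    have := Rwalk_indep ha hHol ((hGc.preconnected v0 j).some)
      (((hGc.preconnected v0 i).some).append (SimpleGraph.Walk.cons hij SimpleGraph.Walk.nil))
    rw [Rwalk_append, Rwalk_cons] at this
    have hn : Rwalk r (SimpleGraph.Walk.nil : G.Walk j j) = 1 := rfl
    rw [hn, mul_one] at this
    exact this
  refine ⟨fun i => q i / ∑ k, q k, fun i => div_pos (hqpos i) hsum, ?_, ?_⟩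
  · rw [← Finset.sum_div]
    field_simp
  · intro i j hij
    have h := hdb i j hij
    have e2 : a j i ≠ 0 := ne_of_gt (ha j i hij.symm).1
    have : q j * a j i = q i * a i j := by
      rw [h, hr]
      field_simp
    rw [div_mul_eq_mul_div, div_mul_eq_mul_div, this]


lemma locMat_mulVec (a : Fin n → Fin n → ℝ) {i j : Fin n} (hij : i ≠ j) (x : Fin n → ℝ) :
    (locMat a i j).mulVec x = fun k =>
      if k = i then x i + a i j * (x j - x i)
      else if k = j then x j + a j i * (x i - x j) else x k := by
  funext k
  rw [Matrix.mulVec, dotProduct]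
  by_cases hki : k = i
  · subst hki
    rw [Fintype.sum_eq_add k j hij (fun l hl => by
      simp [locMat, hl.1, hl.2])]
    simp [locMat, hij, if_neg (Ne.symm hij)]
    ring
  · by_cases hkj : k = j
    · subst hkj
      rw [Fintype.sum_eq_add i k (hij) (fun l hl => by
        simp [locMat, hl.1, hl.2])]
      simp [locMat, hki, hij, if_neg (Ne.symm hij)]
      ring
    · rw [Fintype.sum_eq_single k (fun l hl => by
        simp [locMat, hki, hkj, Ne.symm hl])]
      simp [locMat, hki, hkj]

section step
variable {p a : Fin n → Fin n → ℝ}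

lemma step_sum {p : Fin n → ℝ} (a : Fin n → Fin n → ℝ) {i j : Fin n} (hij : i ≠ j)
    (hdb : p i * a i j = p j * a j i) (x : Fin n → ℝ) :
    ∑ k, p k * (locMat a i j).mulVec x k = ∑ k, p k * x k := by
  rw [locMat_mulVec a hij x]
  have key : ∀ k, p k * (if k = i then x i + a i j * (x j - x i)
      else if k = j then x j + a j i * (x i - x j) else x k) - p k * x k
      = if k = i then p i * a i j * (x j - x i)
        else if k = j then p j * a j i * (x i - x j) else 0 := by
    intro k
    by_cases hki : k = i
    · subst hki; simp; ring
    · by_cases hkj : k = j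
      · subst hkj; simp [hki]; ring
      · simp [hki, hkj]
  have hs : ∑ k, (p k * (if k = i then x i + a i j * (x j - x i)
      else if k = j then x j + a j i * (x i - x j) else x k) - p k * x k) = 0 := by
    rw [Finset.sum_congr rfl (fun k _ => key k)]
    rw [Fintype.sum_eq_add i j hij (fun l hl => by simp [hl.1, hl.2])]
    simp [hij, Ne.symm hij]
    linear_combination (x j - x i) * hdb
  rw [Finset.sum_sub_distrib] at hs
  linarith [hs]

lemma step_energy {p : Fin n → ℝ} (a : Fin n → Fin n → ℝ) {i j : Fin n} (hij : i ≠ j)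
    (hdb : p i * a i j = p j * a j i) (x : Fin n → ℝ) :
    ∑ k, p k * (x k)^2 - ∑ k, p k * ((locMat a i j).mulVec x k)^2
      = p i * a i j * (2 - a i j - a j i) * (x i - x j)^2 := by
  rw [locMat_mulVec a hij x]
  rw [← Finset.sum_sub_distrib]
  have key : ∀ k, p k * (x k)^2 - p k * ((if k = i then x i + a i j * (x j - x i)
      else if k = j then x j + a j i * (x i - x j) else x k))^2
      = if k = i then p i * (x i)^2 - p i * (x i + a i j * (x j - x i))^2
        else if k = j then p j * (x j)^2 - p j * (x j + a j i * (x i - x j))^2 else 0 := by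
    intro k
    by_cases hki : k = i
    · subst hki; simp
    · by_cases hkj : k = j
      · subst hkj; simp [hki]
      · simp [hki, hkj]
  rw [Finset.sum_congr rfl (fun k _ => key k)]
  rw [Fintype.sum_eq_add i j hij (fun l hl => by simp [hl.1, hl.2])]
  simp [hij, Ne.symm hij]
  linear_combination (2*(x i - x j)*(x i) - 2*(x i - x j)^2 + a j i*(x i - x j)^2) * hdb

lemma step_lb (a : Fin n → Fin n → ℝ) {i j : Fin n} (hij : i ≠ j)
    (h1 : a i j ∈ Set.Ioo (0:ℝ) 1) (h2 : a j i ∈ Set.Ioo (0:ℝ) 1)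
    (x : Fin n → ℝ) {c : ℝ} (hc : ∀ k, c ≤ x k) :
    ∀ k, c ≤ (locMat a i j).mulVec x k := by
  intro k
  rw [locMat_mulVec a hij x]
  simp only []
  beta_reduce
  split_ifs with hki hkj
  · subst hki; nlinarith [hc k, hc j, h1.1, h1.2]
  · subst hkj; nlinarith [hc k, hc i, h2.1, h2.2]
  · exact hc k

lemma step_ub (a : Fin n → Fin n → ℝ) {i j : Fin n} (hij : i ≠ j)
    (h1 : a i j ∈ Set.Ioo (0:ℝ) 1) (h2 : a j i ∈ Set.Ioo (0:ℝ) 1)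
    (x : Fin n → ℝ) {c : ℝ} (hc : ∀ k, x k ≤ c) :
    ∀ k, (locMat a i j).mulVec x k ≤ c := by
  intro k
  rw [locMat_mulVec a hij x]
  simp only []
  beta_reduce
  split_ifs with hki hkj
  · subst hki; nlinarith [hc k, hc j, h1.1, h1.2]
  · subst hkj; nlinarith [hc k, hc i, h2.1, h2.2]
  · exact hc k
end step

lemma exists_crossing {V : Type*} (H : SimpleGraph V) (hc : H.Preconnected)
    [DecidableEq V] (S : Finset V) {i0 j0 : V} (hi0 : i0 ∈ S) (hj0 : j0 ∉ S) :
    ∃ i j, i ∈ S ∧ j ∉ S ∧ H.Adj i j := by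
  have aux : ∀ {u v : V} (_ : H.Walk u v), u ∈ S → v ∉ S →
      ∃ i j, i ∈ S ∧ j ∉ S ∧ H.Adj i j := by
    intro u v w
    induction w with
    | nil => intro h1 h2; exact absurd h1 h2
    | cons h w' ih =>
      intro h1 h2
      rename_i u' v' w''
      by_cases hm : v' ∈ S
      · exact ih hm h2
      · exact ⟨_, _, h1, hm, h⟩
  exact aux (hc i0 j0).some hi0 hj0

lemma pigeon (hn : 0 < n) (x : Fin n → ℝ) (mv : ℝ) {i0 i1 : Fin n}
    (hm : x i0 = mv) (hlow : ∀ i, mv ≤ x i) (δ g : ℝ) (hδ : 0 < δ)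
    (hg : 2*δ*n ≤ g) (hMg : mv + g ≤ x i1) :
    ∃ k₀ : ℕ, k₀ < n ∧ ∀ i, ¬(mv + 2*δ*k₀ < x i ∧ x i ≤ mv + 2*δ*k₀ + 2*δ) := by
  by_contra hcon
  push_neg at hcon
  have hch : ∀ k : Fin n, ∃ i, mv + 2*δ*(k:ℕ) < x i ∧ x i ≤ mv + 2*δ*(k:ℕ) + 2*δ :=
    fun k => hcon k k.isLt
  choose f hf1 hf2 using hch
  have hinj : Function.Injective f := by
    intro k k' hkk
    by_contra hne
    rcases lt_or_gt_of_ne (fun h : (k:ℕ) = (k':ℕ) => hne (Fin.ext h)) with hlt | hlt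
    · have h1 := hf1 k'
      have h2 := hf2 k
      rw [hkk] at h2
      have : ((k:ℕ):ℝ) + 1 ≤ ((k':ℕ):ℝ) := by exact_mod_cast Nat.succ_le_of_lt hlt
      nlinarith
    · have h1 := hf1 k
      have h2 := hf2 k'
      rw [← hkk] at h2
      have : ((k':ℕ):ℝ) + 1 ≤ ((k:ℕ):ℝ) := by exact_mod_cast Nat.succ_le_of_lt hlt
      nlinarith
  have hnotmin : ∀ k, f k ≠ i0 := by
    intro k he
    have h1 := hf1 k
    rw [he, hm] at h1
    have : (0:ℝ) ≤ 2*δ*(k:ℕ) := by positivity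
    linarith
  have hcard : (univ : Finset (Fin n)).card ≤ (univ.erase i0).card := by
    apply Finset.card_le_card_of_injOn f
    · intro k _
      exact Finset.mem_erase.mpr ⟨hnotmin k, Finset.mem_univ _⟩
    · exact fun k _ k' _ h => hinj h
  rw [Finset.card_erase_of_mem (Finset.mem_univ _), Finset.card_univ, Fintype.card_fin] at hcard
  omega

set_option maxHeartbeats 2000000 in
lemma key_conv [Nonempty (Fin n)]
    {p : Fin n → ℝ} (hp : ∀ i, 0 < p i) (hpsum : ∑ i, p i = 1)
    {a : Fin n → Fin n → ℝ} (ha : ∀ i j, G.Adj i j → a i j ∈ Set.Ioo (0:ℝ) 1)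
    (hdb : ∀ i j, G.Adj i j → p i * a i j = p j * a j i)
    {γ : ℕ → Fin n × Fin n} (hγ : ∀ t, G.Adj (γ t).1 (γ t).2) (hspan : InfSpanning γ)
    (x0 : Fin n → ℝ) :
    Filter.Tendsto (fun t => (Pseq a γ t).mulVec x0) Filter.atTop
      (nhds (fun _ => ∑ k, p k * x0 k)) := by
  classical
  have hnpos : 0 < n := Fin.pos (Classical.arbitrary (Fin n))
  set x : ℕ → Fin n → ℝ := fun t => (Pseq a γ t).mulVec x0 with hx
  have hij : ∀ t, (γ t).1 ≠ (γ t).2 := fun t => (hγ t).ne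
  have ha1 : ∀ t, a (γ t).1 (γ t).2 ∈ Set.Ioo (0:ℝ) 1 := fun t => ha _ _ (hγ t)
  have ha2 : ∀ t, a (γ t).2 (γ t).1 ∈ Set.Ioo (0:ℝ) 1 := fun t => ha _ _ (hγ t).symm
  have hdbt : ∀ t, p (γ t).1 * a (γ t).1 (γ t).2 = p (γ t).2 * a (γ t).2 (γ t).1 :=
    fun t => hdb _ _ (hγ t)
  have hx0 : x 0 = x0 := Matrix.one_mulVec x0
  have hstep : ∀ t, x (t+1) = (locMat a (γ t).1 (γ t).2).mulVec (x t) := by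
    intro t
    show (Pseq a γ (t+1)).mulVec x0 = _
    rw [show Pseq a γ (t+1) = locMat a (γ t).1 (γ t).2 * Pseq a γ t from rfl,
      ← Matrix.mulVec_mulVec]
  have hne : (univ : Finset (Fin n)).Nonempty := univ_nonempty
  set m : ℕ → ℝ := fun t => univ.inf' hne (x t) with hm_def
  set M : ℕ → ℝ := fun t => univ.sup' hne (x t) with hM_def
  have hm_le : ∀ t k, m t ≤ x t k := fun t k => Finset.inf'_le _ (mem_univ k)
  have hM_ge : ∀ t k, x t k ≤ M t := fun t k => Finset.le_sup' _ (mem_univ k)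
  have hm_mono : Monotone m := by
    apply monotone_nat_of_le_succ
    intro t
    apply Finset.le_inf'
    intro k _
    rw [hstep t]
    exact step_lb a (hij t) (ha1 t) (ha2 t) (x t) (hm_le t) k
  have hM_anti : Antitone M := by
    apply antitone_nat_of_succ_le
    intro t
    apply Finset.sup'_le
    intro k _
    rw [hstep t]
    exact step_ub a (hij t) (ha1 t) (ha2 t) (x t) (hM_ge t) k
  set c : ℝ := ∑ k, p k * x0 k with hc_def
  have hcons : ∀ t, ∑ k, p k * x t k = c := by
    intro t
    induction t with
    | zero => rw [hx0]
    | succ t iht =>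
      rw [hstep t, step_sum a (hij t) (hdbt t) (x t), iht]
  have hc_mem : ∀ t, m t ≤ c ∧ c ≤ M t := by
    intro t
    constructor
    · calc m t = (∑ k, p k) * m t := by rw [hpsum, one_mul]
        _ = ∑ k, p k * m t := by rw [Finset.sum_mul]
        _ ≤ ∑ k, p k * x t k := Finset.sum_le_sum
            (fun k _ => mul_le_mul_of_nonneg_left (hm_le t k) (hp k).le)
        _ = c := hcons t
    · calc c = ∑ k, p k * x t k := (hcons t).symm
        _ ≤ ∑ k, p k * M t := Finset.sum_le_sum
            (fun k _ => mul_le_mul_of_nonneg_left (hM_ge t k) (hp k).le)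
        _ = (∑ k, p k) * M t := by rw [Finset.sum_mul]
        _ = M t := by rw [hpsum, one_mul]
  -- energy
  set E : ℕ → ℝ := fun t => ∑ k, p k * (x t k)^2 with hE_def
  have hE_nonneg : ∀ t, 0 ≤ E t :=
    fun t => Finset.sum_nonneg (fun k _ => mul_nonneg (hp k).le (sq_nonneg _))
  set D : ℕ → ℝ := fun t => x t (γ t).1 - x t (γ t).2 with hD_def
  set g : Fin n × Fin n → ℝ := fun q =>
    if G.Adj q.1 q.2 then p q.1 * a q.1 q.2 * (2 - a q.1 q.2 - a q.2 q.1) else 1 with hg_def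
  have himg : ((univ : Finset (Fin n × Fin n)).image g).Nonempty :=
    Finset.Nonempty.image univ_nonempty g
  have hgpos : ∀ q : Fin n × Fin n, 0 < g q := by
    intro q
    simp only [hg_def]
    by_cases hadj : G.Adj q.1 q.2
    · rw [if_pos hadj]
      have h1 := ha _ _ hadj
      have h2 := ha _ _ hadj.symm
      have h3 : (0:ℝ) < 2 - a q.1 q.2 - a q.2 q.1 := by linarith [h1.2, h2.2]
      exact mul_pos (mul_pos (hp q.1) h1.1) h3
    · rw [if_neg hadj]; norm_num
  set κ : ℝ := ((univ : Finset (Fin n × Fin n)).image g).min' himg with hκ_def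
  have hκpos : 0 < κ := by
    obtain ⟨q, _, hq⟩ := Finset.mem_image.mp (Finset.min'_mem _ himg)
    rw [hκ_def, ← hq]
    exact hgpos q
  have hκle : ∀ t, κ ≤ g (γ t) :=
    fun t => Finset.min'_le _ _ (Finset.mem_image_of_mem g (mem_univ _))
  have hEstep : ∀ t, E t - E (t+1) = g (γ t) * (D t)^2 := by
    intro t
    rw [hg_def]
    simp only [if_pos (hγ t)]
    rw [hE_def]
    simp only
    rw [hstep t, step_energy a (hij t) (hdbt t) (x t)]
  have hEanti : Antitone E := by
    apply antitone_nat_of_succ_le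
    intro t
    have h1 := hEstep t
    nlinarith [mul_le_mul_of_nonneg_right (hκle t) (sq_nonneg (D t)), hκpos, sq_nonneg (D t)]
  have hEtend : Filter.Tendsto E Filter.atTop (nhds (⨅ t, E t)) :=
    tendsto_atTop_ciInf hEanti ⟨0, fun y ⟨t, ht⟩ => ht ▸ hE_nonneg t⟩
  have hdiff : Filter.Tendsto (fun t => E t - E (t+1)) Filter.atTop (nhds 0) := by
    have h2 : Filter.Tendsto (fun t => E (t+1)) Filter.atTop (nhds (⨅ t, E t)) :=
      hEtend.comp (Filter.tendsto_add_atTop_nat 1)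
    have := hEtend.sub h2
    simpa using this
  have hDsmall : ∀ ε : ℝ, 0 < ε → ∃ T, ∀ t, T ≤ t → |D t| < ε := by
    intro ε hε
    obtain ⟨T, hT⟩ := (Metric.tendsto_atTop.mp hdiff) (κ * ε^2) (by positivity)
    refine ⟨T, fun t ht => ?_⟩
    have h1 := hT t ht
    rw [Real.dist_eq, sub_zero] at h1
    have h2 := hEstep t
    have h3 : κ * (D t)^2 ≤ g (γ t) * (D t)^2 :=
      mul_le_mul_of_nonneg_right (hκle t) (sq_nonneg _)
    have h4 : E t - E (t+1) ≤ |E t - E (t+1)| := le_abs_self _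
    by_contra hDa
    push_neg at hDa
    have h5 : ε^2 ≤ (D t)^2 := by nlinarith [abs_nonneg (D t), sq_abs (D t)]
    nlinarith [mul_le_mul_of_nonneg_left h5 hκpos.le]
  -- diameter goes to zero
  have hdiam : ∀ ε : ℝ, 0 < ε → ∃ T, M T - m T < ε := by
    by_contra hcon
    push_neg at hcon
    obtain ⟨ε, hε, hall⟩ := hcon
    set δ : ℝ := ε / (2 * n) with hδ_def
    have hδ : 0 < δ := by positivity
    obtain ⟨T, hT⟩ := hDsmall δ hδ
    obtain ⟨i0, _, hi0⟩ := Finset.exists_mem_eq_inf' hne (x T)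
    obtain ⟨i1, _, hi1⟩ := Finset.exists_mem_eq_sup' hne (x T)
    have hg2 : 2*δ*n ≤ ε := by
      have hne0 : (n:ℝ) ≠ 0 := by
        have : (0:ℝ) < n := by exact_mod_cast hnpos
        linarith
      apply le_of_eq
      rw [hδ_def]
      field_simp
    have hMg : m T + ε ≤ x T i1 := by
      have h := hall T
      have hMi1 : M T = x T i1 := hi1
      rw [hMi1] at h
      linarith
    obtain ⟨k₀, hk₀n, hk₀⟩ := pigeon hnpos (x T) (m T) hi0.symm (hm_le T) δ ε hδ hg2 hMg
    set θ : ℝ := m T + 2*δ*k₀ with hθ_def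
    set S : Finset (Fin n) := univ.filter (fun i => x T i ≤ θ) with hS_def
    have hQ : ∀ s, (∀ i ∈ S, x (T+s) i ≤ θ) ∧ (∀ i ∉ S, θ + 2*δ < x (T+s) i) := by
      intro s
      induction s with
      | zero =>
        constructor
        · intro i hi
          exact (Finset.mem_filter.mp hi).2
        · intro i hi
          have h1 : ¬ (x T i ≤ θ) := fun h => hi (Finset.mem_filter.mpr ⟨mem_univ i, h⟩)
          push_neg at h1
          by_contra h2
          push_neg at h2
          exact (hk₀ i) ⟨h1, h2⟩
      | succ s ihs =>
        set t := T + s with ht_def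
        have hDt : |D t| < δ := hT t (by omega)
        have hstep' : x (T + (s+1)) = (locMat a (γ t).1 (γ t).2).mulVec (x t) := by
          rw [show T + (s+1) = t + 1 by omega]
          exact hstep t
        by_cases h1S : (γ t).1 ∈ S <;> by_cases h2S : (γ t).2 ∈ S
        · -- both in S
          constructor
          · intro k hk
            rw [hstep', locMat_mulVec a (hij t) (x t)]
            simp only []
            beta_reduce
            split_ifs with e1 e2
            · subst e1; nlinarith [ihs.1 _ h1S, ihs.1 _ h2S, (ha1 t).1, (ha1 t).2]
            · subst e2; nlinarith [ihs.1 _ h1S, ihs.1 _ h2S, (ha2 t).1, (ha2 t).2]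
            · exact ihs.1 k hk
          · intro k hk
            rw [hstep', locMat_mulVec a (hij t) (x t)]
            simp only []
            beta_reduce
            split_ifs with e1 e2
            · exact absurd (e1 ▸ h1S) hk
            · exact absurd (e2 ▸ h2S) hk
            · exact ihs.2 k hk
        · -- 1 in S, 2 not: impossible
          exfalso
          have h1 := ihs.1 _ h1S
          have h2 := ihs.2 _ h2S
          have : 2*δ < x t (γ t).2 - x t (γ t).1 := by linarith
          have habs : x t (γ t).2 - x t (γ t).1 ≤ |D t| := by
            rw [hD_def, abs_sub_comm]
            exact le_abs_self _
          linarith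
        · -- 2 in S, 1 not: impossible
          exfalso
          have h1 := ihs.1 _ h2S
          have h2 := ihs.2 _ h1S
          have : 2*δ < x t (γ t).1 - x t (γ t).2 := by linarith
          have habs : x t (γ t).1 - x t (γ t).2 ≤ |D t| := le_abs_self _
          linarith
        · -- both out
          constructor
          · intro k hk
            rw [hstep', locMat_mulVec a (hij t) (x t)]
            simp only []
            beta_reduce
            split_ifs with e1 e2
            · exact absurd (e1 ▸ hk) h1S
            · exact absurd (e2 ▸ hk) h2S
            · exact ihs.1 k hk
          · intro k hk
            rw [hstep', locMat_mulVec a (hij t) (x t)]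
            simp only []
            beta_reduce
            split_ifs with e1 e2
            · subst e1; nlinarith [ihs.2 _ h1S, ihs.2 _ h2S, (ha1 t).1, (ha1 t).2]
            · subst e2; nlinarith [ihs.2 _ h1S, ihs.2 _ h2S, (ha2 t).1, (ha2 t).2]
            · exact ihs.2 k hk
    have hi0S : i0 ∈ S := by
      apply Finset.mem_filter.mpr
      refine ⟨mem_univ _, ?_⟩
      rw [← hi0, hθ_def]
      have : (0:ℝ) ≤ 2*δ*k₀ := by positivity
      linarith
    have hi1S : i1 ∉ S := by
      intro hmem
      have h1 := (Finset.mem_filter.mp hmem).2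
      have hk1 : ((k₀:ℝ) + 1) ≤ (n:ℝ) := by exact_mod_cast Nat.succ_le_of_lt hk₀n
      have : θ + 2*δ ≤ m T + ε := by
        rw [hθ_def]
        nlinarith [hδ]
      linarith [hMg, hδ]
    obtain ⟨s, l, hsT, hconn⟩ := hspan T
    obtain ⟨i, j, hiS, hjS, hadj⟩ :=
      exists_crossing _ hconn.preconnected S hi0S hi1S
    rw [SimpleGraph.fromRel_adj] at hadj
    obtain ⟨hne', hrel⟩ := hadj
    have hget : ∃ t, s ≤ t ∧ t < s + l ∧ (γ t = (i, j) ∨ γ t = (j, i)) := by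
      rcases hrel with h | h
      · exact h
      · obtain ⟨t, h1, h2, h3⟩ := h
        exact ⟨t, h1, h2, h3.symm.imp (fun h => h) (fun h => h)⟩
    obtain ⟨t, hts, htl, hor⟩ := hget
    have htT : T ≤ t := le_trans hsT hts
    have hQt := hQ (t - T)
    rw [show T + (t - T) = t by omega] at hQt
    have hDt : |D t| < δ := hT t htT
    rcases hor with h | h
    · have e1 : (γ t).1 = i := by rw [h]
      have e2 : (γ t).2 = j := by rw [h]
      have h1 := hQt.1 i hiS
      have h2 := hQt.2 j hjS
      have habs : x t j - x t i ≤ |D t| := by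
        show x t j - x t i ≤ |x t (γ t).1 - x t (γ t).2|
        rw [e1, e2, abs_sub_comm]
        exact le_abs_self _
      linarith
    · have e1 : (γ t).1 = j := by rw [h]
      have e2 : (γ t).2 = i := by rw [h]
      have h1 := hQt.1 i hiS
      have h2 := hQt.2 j hjS
      have habs : x t j - x t i ≤ |D t| := by
        show x t j - x t i ≤ |x t (γ t).1 - x t (γ t).2|
        rw [e1, e2]
        exact le_abs_self _
      linarith
  -- conclude
  rw [tendsto_pi_nhds]
  intro k
  rw [Metric.tendsto_atTop]
  intro ε hε
  obtain ⟨T, hT⟩ := hdiam ε hε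
  refine ⟨T, fun t ht => ?_⟩
  have h1 : M t - m t ≤ M T - m T := by
    have := hm_mono ht
    have := hM_anti ht
    linarith
  have h2 := hc_mem t
  have h3 := hm_le t k
  have h4 := hM_ge t k
  rw [Real.dist_eq]
  rw [abs_lt]
  constructor <;> [skip; skip] <;> linarith


lemma exists_gamma0 (hGc : G.Connected) {i0 j0 : Fin n} (h0 : G.Adj i0 j0) :
    ∃ γ0 : ℕ → Fin n × Fin n, (∀ t, G.Adj (γ0 t).1 (γ0 t).2) ∧ InfSpanning γ0 := by
  classical
  set F : Finset (Fin n × Fin n) := univ.filter (fun q => G.Adj q.1 q.2) with hF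
  have hFne : F.Nonempty := ⟨(i0, j0), by simp [hF, h0]⟩
  set L : List (Fin n × Fin n) := F.toList with hL
  have hlen : 0 < L.length := by
    rw [hL, Finset.length_toList]
    exact Finset.card_pos.mpr hFne
  refine ⟨fun t => L.get ⟨t % L.length, Nat.mod_lt _ hlen⟩, ?_, ?_⟩
  · intro t
    beta_reduce
    have hmem : L.get ⟨t % L.length, Nat.mod_lt _ hlen⟩ ∈ L := L.get_mem _
    exact (Finset.mem_filter.mp (Finset.mem_toList.mp hmem)).2
  · intro T
    refine ⟨T, L.length, le_rfl, ?_⟩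
    apply SimpleGraph.Connected.mono _ hGc
    intro i j hadj
    rw [SimpleGraph.fromRel_adj]
    refine ⟨hadj.ne, Or.inl ?_⟩
    have hmem : (i, j) ∈ L :=
      Finset.mem_toList.mpr (Finset.mem_filter.mpr ⟨mem_univ _, hadj⟩)
    obtain ⟨⟨idx, hidx⟩, hget⟩ := List.mem_iff_get.mp hmem
    have hdm : L.length * (T / L.length) + T % L.length = T := Nat.div_add_mod T L.length
    have hTm : T % L.length < L.length := Nat.mod_lt _ hlen
    by_cases hcase : T % L.length ≤ idx
    · refine ⟨L.length * (T / L.length) + idx, by omega, by omega, Or.inl ?_⟩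
      have hmod : (L.length * (T / L.length) + idx) % L.length = idx := by
        rw [Nat.mul_add_mod]
        exact Nat.mod_eq_of_lt hidx
      beta_reduce
      simp only [hmod]
      exact hget
    · refine ⟨L.length * (T / L.length) + L.length + idx, by omega, by omega, Or.inl ?_⟩
      have hmod : (L.length * (T / L.length) + L.length + idx) % L.length = idx := by
        have : L.length * (T / L.length) + L.length + idx
            = L.length * (T / L.length + 1) + idx := by ring
        rw [this, Nat.mul_add_mod]
        exact Nat.mod_eq_of_lt hidx
      beta_reduce
      simp only [hmod]
      exact hget

lemma Pseq_prefix (a : Fin n → Fin n → ℝ) (e : Fin n × Fin n) (γ : ℕ → Fin n × Fin n) :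
    ∀ t, Pseq a (fun s => if s = 0 then e else γ (s-1)) (t+1)
      = Pseq a γ t * locMat a e.1 e.2 := by
  intro t
  induction t with
  | zero =>
    show locMat a e.1 e.2 * 1 = 1 * locMat a e.1 e.2
    rw [mul_one, one_mul]
  | succ t iht =>
    show locMat a (γ t).1 (γ t).2 * Pseq a (fun s => if s = 0 then e else γ (s-1)) (t+1)
      = (locMat a (γ t).1 (γ t).2 * Pseq a γ t) * locMat a e.1 e.2
    rw [iht, mul_assoc]

lemma InfSpanning_prefix (e : Fin n × Fin n) (γ : ℕ → Fin n × Fin n)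
    (h : InfSpanning γ) : InfSpanning (fun s => if s = 0 then e else γ (s-1)) := by
  intro T
  obtain ⟨s, l, hs, hseg⟩ := h T
  refine ⟨s+1, l, by omega, ?_⟩
  apply SimpleGraph.Connected.mono _ hseg
  intro i j hadj
  rw [SimpleGraph.fromRel_adj] at hadj ⊢
  obtain ⟨hne, hrel⟩ := hadj
  refine ⟨hne, ?_⟩
  rcases hrel with ⟨t, h1, h2, h3⟩ | ⟨t, h1, h2, h3⟩
  · exact Or.inl ⟨t+1, by omega, by omega, by simpa using h3⟩
  · exact Or.inr ⟨t+1, by omega, by omega, by simpa using h3⟩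


lemma holonomic_of_db {p : Fin n → ℝ} (hp : ∀ i, 0 < p i)
    {a : Fin n → Fin n → ℝ} (ha : ∀ i j, G.Adj i j → a i j ∈ Set.Ioo (0:ℝ) 1)
    (hdb : ∀ i j, G.Adj i j → p i * a i j = p j * a j i) :
    Holonomic G a := by
  have key : ∀ (u v : Fin n) (w : G.Walk u v),
      Rwalk (fun i j => a i j / a j i) w = p v / p u := by
    intro u v w
    induction w with
    | nil =>
      rw [Rwalk_nil, div_self (ne_of_gt (hp _))]
    | cons h w' ih =>
      rename_i x y z
      rw [Rwalk_cons, ih]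
      have hd := hdb x y h
      have e1 : a x y ≠ 0 := ne_of_gt (ha x y h).1
      have e2 : a y x ≠ 0 := ne_of_gt (ha y x h.symm).1
      have p1 : p x ≠ 0 := ne_of_gt (hp x)
      have p2 : p y ≠ 0 := ne_of_gt (hp y)
      field_simp
      linear_combination p z * hd
  intro u c _ _
  rw [key u u c, div_self (ne_of_gt (hp u))]

lemma locMat_col (a : Fin n → Fin n → ℝ) {i j : Fin n} (hij : i ≠ j) (m : Fin n) :
    locMat a i j m i = if m = i then 1 - a i j else if m = j then a j i else 0 := by
  by_cases h1 : m = i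
  · subst h1; simp [locMat]
  · by_cases h2 : m = j
    · subst h2; simp [locMat, h1, Ne.symm h1]
    · simp [locMat, h1, h2, Ne.symm h1]

end helpers

/-- There is a unique positive probability vector `p` such that `P_γ → 𝟏pᵀ` for every
infinite spanning sequence `γ` of edges, if and only if the local stochastic matrices
are holonomic for `G`. -/
theorem stmt15 {n : ℕ} (G : SimpleGraph (Fin n)) (hGc : G.Connected)
    (a : Fin n → Fin n → ℝ) (ha : ∀ i j, G.Adj i j → a i j ∈ Set.Ioo (0:ℝ) 1) :
    (∃! p : Fin n → ℝ, (∀ i, 0 < p i) ∧ ∑ i, p i = 1 ∧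
        ∀ γ : ℕ → Fin n × Fin n, (∀ t, G.Adj (γ t).1 (γ t).2) → InfSpanning γ →
          Filter.Tendsto (Pseq a γ) Filter.atTop
            (nhds (Matrix.of fun _ j => p j))) ↔
      Holonomic G a := by
  classical
  have hnn : Nonempty (Fin n) := hGc.nonempty
  constructor
  · rintro ⟨p, ⟨hp, hps, hconv⟩, -⟩
    have hdb : ∀ i j, G.Adj i j → p i * a i j = p j * a j i := by
      intro i j hij
      obtain ⟨γ0, hγ0, hspan0⟩ := exists_gamma0 hGc hij
      have hγ' : ∀ t, G.Adj ((fun s => if s = 0 then (i,j) else γ0 (s-1)) t).1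
          ((fun s => if s = 0 then (i,j) else γ0 (s-1)) t).2 := by
        intro t
        cases t with
        | zero => simpa using hij
        | succ t => simpa using hγ0 t
      have h1 := hconv _ hγ' (InfSpanning_prefix (i,j) γ0 hspan0)
      have h2 := hconv γ0 hγ0 hspan0
      have h1' : Filter.Tendsto
          (fun t => Pseq a (fun s => if s = 0 then (i,j) else γ0 (s-1)) (t+1))
          Filter.atTop (nhds (Matrix.of fun _ j => p j)) :=
        h1.comp (Filter.tendsto_add_atTop_nat 1)
      have heq : (fun t => Pseq a (fun s => if s = 0 then (i,j) else γ0 (s-1)) (t+1))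
          = fun t => Pseq a γ0 t * locMat a i j :=
        funext fun t => Pseq_prefix a (i,j) γ0 t
      rw [heq] at h1'
      have h3 : Filter.Tendsto (fun t => Pseq a γ0 t * locMat a i j) Filter.atTop
          (nhds ((Matrix.of fun _ j => p j) * locMat a i j)) :=
        ((Continuous.matrix_mul continuous_id continuous_const).tendsto _).comp h2
      have hLA := tendsto_nhds_unique h3 h1'
      have hent := congrFun (congrFun hLA (Classical.arbitrary (Fin n))) i
      rw [Matrix.mul_apply] at hent
      have hsum : ∑ m, (Matrix.of fun _ j' => p j') (Classical.arbitrary (Fin n)) m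
            * locMat a i j m i = p i * (1 - a i j) + p j * a j i := by
        rw [Fintype.sum_eq_add i j hij.ne (fun m hm => by
          rw [locMat_col a hij.ne m, if_neg hm.1, if_neg hm.2, mul_zero])]
        rw [locMat_col a hij.ne i, locMat_col a hij.ne j,
          if_pos rfl, if_neg (Ne.symm hij.ne), if_pos rfl]
        rfl
      rw [hsum] at hent
      have hLi : (Matrix.of fun _ j' => p j') (Classical.arbitrary (Fin n)) i = p i := rfl
      rw [hLi] at hent
      linarith [hent]
    exact holonomic_of_db hp ha hdb
  · intro hHol
    obtain ⟨p, hp, hps, hdb⟩ := exists_db hGc ha hHol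
    have hmat : ∀ γ : ℕ → Fin n × Fin n, (∀ t, G.Adj (γ t).1 (γ t).2) → InfSpanning γ →
        Filter.Tendsto (Pseq a γ) Filter.atTop (nhds (Matrix.of fun _ j => p j)) := by
      intro γ hγ hspan
      refine tendsto_pi_nhds.mpr ?_
      intro k
      rw [tendsto_pi_nhds]
      intro l
      have h := key_conv hp hps ha hdb hγ hspan (Pi.single l 1)
      rw [tendsto_pi_nhds] at h
      have hk := h k
      have he : (fun t => (Pseq a γ t).mulVec (Pi.single l 1) k)
          = fun t => Pseq a γ t k l := by
        funext t
        rw [Matrix.mulVec_single]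
        exact mul_one _
      have hc : ∑ m, p m * (Pi.single l 1 : Fin n → ℝ) m = p l := by
        rw [Fintype.sum_eq_single l (fun m hm => by simp [Pi.single_eq_of_ne hm])]
        simp
      rw [show (Matrix.of fun _ j' => p j') k l = p l from rfl, ← hc, ← he]
      exact hk
    refine ⟨p, ⟨hp, hps, fun γ hγ hspan => hmat γ hγ hspan⟩, ?_⟩
    rintro p' ⟨hp', hps', hconv'⟩
    by_cases hedge : ∃ i j, G.Adj i j
    · obtain ⟨i, j, hij⟩ := hedge
      obtain ⟨γ0, hγ0, hspan0⟩ := exists_gamma0 hGc hij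
      have h1 := hconv' γ0 hγ0 hspan0
      have h2 := hmat γ0 hγ0 hspan0
      have hlim := tendsto_nhds_unique h1 h2
      funext l
      exact congrFun (congrFun hlim (Classical.arbitrary (Fin n))) l
    · push_neg at hedge
      have hsub : ∀ u v : Fin n, u = v := by
        intro u v
        by_contra hne
        obtain ⟨w⟩ := hGc.preconnected u v
        cases w with
        | nil => exact hne rfl
        | cons h w' => exact hedge _ _ h
      obtain ⟨i⟩ := hnn
      have huniv : (univ : Finset (Fin n)) = {i} :=
        Finset.eq_singleton_iff_unique_mem.mpr ⟨mem_univ i, fun x _ => hsub x i⟩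
      funext l
      have h1 : p' i = 1 := by
        have hthis := hps'
        rw [huniv, Finset.sum_singleton] at hthis
        exact hthis
      have h2 : p i = 1 := by
        have hthis := hps
        rw [huniv, Finset.sum_singleton] at hthis
        exact hthis
      rw [hsub l i, h1, h2]
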